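/- If H is a Hilbert space, Y a Banach space, and T : H → Y a bounded linear operator, then the Weyl numbers coincide with the approximation numbers: x_n(T) = a_n(T) for all n ∈ ℕ. -/

import Mathlib

noncomputable section

open scoped ENNReal

/-- The `n`-th approximation number. -/
def approxNumber {X Y : Type*} [NormedAddCommGroup X] [NormedSpace ℝ X]
    [NormedAddCommGroup Y] [NormedSpace ℝ Y] (n : ℕ) (T : X →L[ℝ] Y) : ℝ :=
  sInf {c : ℝ | ∃ A : X →L[ℝ] Y, FiniteDimensional ℝ (LinearMap.range (A : X →ₗ[ℝ] Y)) ∧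
    Module.finrank ℝ (LinearMap.range (A : X →ₗ[ℝ] Y)) < n ∧ ‖T - A‖ = c}

/-- The Hilbert sequence space `ℓ₂`. -/
abbrev Ell2 : Type := lp (fun _ : ℕ => ℝ) 2

/-- The `n`-th Weyl number. -/
def weylNumber {X Y : Type*} [NormedAddCommGroup X] [NormedSpace ℝ X]
    [NormedAddCommGroup Y] [NormedSpace ℝ Y] (n : ℕ) (T : X →L[ℝ] Y) : ℝ :=
  ⨆ A : {A : Ell2 →L[ℝ] X // ‖A‖ ≤ 1}, approxNumber n (T.comp A.1)

/-!
`x_n(T) ≤ a_n(T)` is the ideal property of approximation numbers. Conversely, every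
finite-dimensional `M ⊆ H` embeds isometrically into `ℓ₂`, so `T|_M` factors through a contraction
`ℓ₂ → H` and `a_n(T|_M) ≤ x_n(T)`; it remains to show `a_n(T) ≤ δ := sup_M a_n(T|_M)`. Fix
`δ' > δ`. On `M = span S`, `S` finite, the kernel of an approximant of rank `< n` is cut out by
`n - 1` vectors `v_S i` of norm `≤ 1`, so `‖T y‖ ≤ δ' ‖y‖ + ‖T‖ ∑ |⟪v_S i, y⟫|` on `M`. Weak limits
`w i` of the `v_S i` along an ultrafilter on the finite sets `S` (Banach–Alaoglu) give
`‖T y‖ ≤ δ' ‖y‖` on `{w}ᗮ`, so `T ∘ P_{span w}` approximates `T` within `δ'` with rank `< n`.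
-/
open Module Filter Topology
open scoped RealInnerProductSpace InnerProduct

section ApproxNumber

variable {X Y Z : Type*} [NormedAddCommGroup X] [NormedSpace ℝ X]
  [NormedAddCommGroup Y] [NormedSpace ℝ Y] [NormedAddCommGroup Z] [NormedSpace ℝ Z]

theorem approxNumber_nonneg (n : ℕ) (T : X →L[ℝ] Y) : 0 ≤ approxNumber n T :=
  Real.sInf_nonneg fun _ ⟨_, _, _, hc⟩ => hc ▸ norm_nonneg _

theorem approxNumber_zero (T : X →L[ℝ] Y) : approxNumber 0 T = 0 := by
  simp [approxNumber]

instance : FiniteDimensional ℝ (LinearMap.range ((0 : X →L[ℝ] Y) : X →ₗ[ℝ] Y)) := by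
  rw [ContinuousLinearMap.toLinearMap_zero, LinearMap.range_zero]; infer_instance

theorem finrank_range_zero : finrank ℝ (LinearMap.range ((0 : X →L[ℝ] Y) : X →ₗ[ℝ] Y)) = 0 := by
  rw [ContinuousLinearMap.toLinearMap_zero, LinearMap.range_zero, finrank_bot]

theorem approxNumber_le_norm_sub {n : ℕ} (T B : X →L[ℝ] Y)
    [FiniteDimensional ℝ (LinearMap.range (B : X →ₗ[ℝ] Y))]
    (hB : finrank ℝ (LinearMap.range (B : X →ₗ[ℝ] Y)) < n) :
    approxNumber n T ≤ ‖T - B‖ :=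
  csInf_le ⟨0, fun _ ⟨_, _, _, hc⟩ => hc ▸ norm_nonneg _⟩ ⟨B, ‹_›, hB, rfl⟩

theorem approxNumber_le_norm (n : ℕ) (T : X →L[ℝ] Y) : approxNumber n T ≤ ‖T‖ := by
  rcases Nat.eq_zero_or_pos n with rfl | hn
  · exact (approxNumber_zero T).trans_le (norm_nonneg T)
  · simpa using approxNumber_le_norm_sub T 0 (finrank_range_zero.trans_lt hn)

theorem exists_norm_sub_lt_of_approxNumber_lt {n : ℕ} (hn : 0 < n) {T : X →L[ℝ] Y} {c : ℝ}
    (hc : approxNumber n T < c) :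
    ∃ B : X →L[ℝ] Y, FiniteDimensional ℝ (LinearMap.range (B : X →ₗ[ℝ] Y)) ∧
      finrank ℝ (LinearMap.range (B : X →ₗ[ℝ] Y)) < n ∧ ‖T - B‖ < c := by
  have hne : Set.Nonempty {c : ℝ | ∃ B : X →L[ℝ] Y,
      FiniteDimensional ℝ (LinearMap.range (B : X →ₗ[ℝ] Y)) ∧
      finrank ℝ (LinearMap.range (B : X →ₗ[ℝ] Y)) < n ∧ ‖T - B‖ = c} :=
    ⟨_, 0, inferInstance, finrank_range_zero.trans_lt hn, rfl⟩
  obtain ⟨_, ⟨B, hB, hBn, rfl⟩, hlt⟩ := exists_lt_of_csInf_lt hne hc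
  exact ⟨B, hB, hBn, hlt⟩

theorem approxNumber_comp_le (n : ℕ) (T : X →L[ℝ] Y) {C : Z →L[ℝ] X} (hC : ‖C‖ ≤ 1) :
    approxNumber n (T ∘L C) ≤ approxNumber n T := by
  rcases Nat.eq_zero_or_pos n with rfl | hn
  · simp [approxNumber_zero]
  refine le_of_forall_gt_imp_ge_of_dense fun c hc => ?_
  obtain ⟨B, hB, hBn, hTB⟩ := exists_norm_sub_lt_of_approxNumber_lt hn hc
  have hle := LinearMap.range_comp_le_range (C : Z →ₗ[ℝ] X) (B : X →ₗ[ℝ] Y)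
  have : FiniteDimensional ℝ (LinearMap.range ((B ∘L C : Z →L[ℝ] Y) : Z →ₗ[ℝ] Y)) :=
    Submodule.finiteDimensional_of_le hle
  calc approxNumber n (T ∘L C) ≤ ‖T ∘L C - B ∘L C‖ :=
        approxNumber_le_norm_sub _ _ ((Submodule.finrank_mono hle).trans_lt hBn)
    _ = ‖(T - B) ∘L C‖ := by rw [ContinuousLinearMap.sub_comp]
    _ ≤ ‖T - B‖ * ‖C‖ := ContinuousLinearMap.opNorm_comp_le _ _
    _ ≤ ‖T - B‖ := mul_le_of_le_one_right (norm_nonneg _) hC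
    _ ≤ c := hTB.le

end ApproxNumber

section WeylNumber

variable {X Y : Type*} [NormedAddCommGroup X] [NormedSpace ℝ X]
  [NormedAddCommGroup Y] [NormedSpace ℝ Y]

theorem weylNumber_le_approxNumber (n : ℕ) (T : X →L[ℝ] Y) :
    weylNumber n T ≤ approxNumber n T :=
  have : Nonempty {A : Ell2 →L[ℝ] X // ‖A‖ ≤ 1} := ⟨⟨0, by simp⟩⟩
  ciSup_le fun A => approxNumber_comp_le n T A.2

theorem approxNumber_comp_le_weylNumber (n : ℕ) (T : X →L[ℝ] Y) (A : Ell2 →L[ℝ] X)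
    (hA : ‖A‖ ≤ 1) : approxNumber n (T ∘L A) ≤ weylNumber n T := by
  refine le_ciSup (f := fun A : {A : Ell2 →L[ℝ] X // ‖A‖ ≤ 1} => approxNumber n (T ∘L A.1))
    ⟨‖T‖, ?_⟩ ⟨A, hA⟩
  rintro _ ⟨A, rfl⟩
  calc approxNumber n (T ∘L A.1) ≤ approxNumber n T := approxNumber_comp_le n T A.2
    _ ≤ ‖T‖ := approxNumber_le_norm n T

theorem exists_linearIsometry_ell2 (E : Type*) [NormedAddCommGroup E] [InnerProductSpace ℝ E]
    [FiniteDimensional ℝ E] : Nonempty (E →ₗᵢ[ℝ] Ell2) := by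
  let b := (stdOrthonormalBasis ℝ E).toBasis
  let e : HilbertBasis ℕ ℝ Ell2 := default
  let f : Fin (finrank ℝ E) → Ell2 := fun i => e i
  have hb : b.constr ℝ f ∘ b = f := funext (b.constr_basis ℝ f)
  have hbo : Orthonormal ℝ b := by
    simpa only [b, OrthonormalBasis.coe_toBasis] using (stdOrthonormalBasis ℝ E).orthonormal
  have hf : Orthonormal ℝ (b.constr ℝ f ∘ b) := by
    rw [hb]; exact e.orthonormal.comp _ Fin.val_injective
  exact ⟨(b.constr ℝ f).isometryOfOrthonormal hbo hf⟩

theorem approxNumber_comp_le_weylNumber_of_finiteDimensional (n : ℕ) (T : X →L[ℝ] Y)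
    {E : Type*} [NormedAddCommGroup E] [InnerProductSpace ℝ E] [FiniteDimensional ℝ E]
    {R : E →L[ℝ] X} (hR : ‖R‖ ≤ 1) : approxNumber n (T ∘L R) ≤ weylNumber n T := by
  obtain ⟨J⟩ := exists_linearIsometry_ell2 E
  have : CompleteSpace E := FiniteDimensional.complete ℝ E
  set J' : E →L[ℝ] Ell2 := J.toContinuousLinearMap
  have hJ : J'† ∘L J' = 1 := (J'.norm_map_iff_adjoint_comp_self).mp J.norm_map
  have hA : ‖R ∘L J'†‖ ≤ 1 := calc
    ‖R ∘L J'†‖ ≤ ‖R‖ * ‖J'†‖ := R.opNorm_comp_le _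
    _ ≤ 1 * 1 := by
      gcongr
      rw [ContinuousLinearMap.adjoint.norm_map]; exact J.norm_toContinuousLinearMap_le
    _ = 1 := one_mul 1
  calc approxNumber n (T ∘L R) = approxNumber n ((T ∘L R ∘L J'†) ∘L J') := by
        rw [ContinuousLinearMap.comp_assoc, ContinuousLinearMap.comp_assoc, hJ]; rfl
    _ ≤ approxNumber n (T ∘L R ∘L J'†) := approxNumber_comp_le n _ J.norm_toContinuousLinearMap_le
    _ ≤ weylNumber n T := approxNumber_comp_le_weylNumber n T _ hA

end WeylNumber

section Hilbert

variable {E : Type*} [NormedAddCommGroup E] [InnerProductSpace ℝ E]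

theorem Submodule.exists_norm_starProjection_le_sum_inner (U : Submodule ℝ E)
    [FiniteDimensional ℝ U] {k : ℕ} (hk : finrank ℝ U ≤ k) :
    ∃ v : Fin k → E, (∀ i, ‖v i‖ ≤ 1) ∧ ∀ y, ‖U.starProjection y‖ ≤ ∑ i, |⟪v i, y⟫| := by
  let b := stdOrthonormalBasis ℝ U
  let v : Fin k → E := fun i => if h : (i : ℕ) < finrank ℝ U then b ⟨i, h⟩ else 0
  have hb : ∀ j, ‖(b j : E)‖ = 1 := b.norm_eq_one
  have hv : ∀ j, v (Fin.castLE hk j) = b j := fun j => dif_pos j.2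
  refine ⟨v, fun i => ?_, fun y => ?_⟩
  · by_cases h : (i : ℕ) < finrank ℝ U
    · simp [v, h, hb]
    · simp [v, h]
  calc ‖U.starProjection y‖ = ‖∑ j, ⟪(b j : E), y⟫ • (b j : E)‖ := by
        rw [U.starProjection_apply, b.orthogonalProjectionOnto_apply_eq_sum, Submodule.coe_sum]
        simp only [Submodule.coe_smul]
    _ ≤ ∑ j, |⟪(b j : E), y⟫| := by
        refine (norm_sum_le _ _).trans (Finset.sum_le_sum fun j _ => ?_)
        simp [norm_smul, hb]
    _ = ∑ j, |⟪v (Fin.castLE hk j), y⟫| := by simp only [hv]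
    _ = ∑ i ∈ Finset.univ.map (Fin.castLEEmb hk), |⟪v i, y⟫| := by rw [Finset.sum_map]; rfl
    _ ≤ ∑ i, |⟪v i, y⟫| := Finset.sum_le_univ_sum_of_nonneg fun _ => abs_nonneg _

variable {Y : Type*} [NormedAddCommGroup Y] [NormedSpace ℝ Y]

theorem exists_norm_apply_le_add_sum_inner [FiniteDimensional ℝ E] (S B : E →L[ℝ] Y) {k : ℕ}
    (hk : finrank ℝ (LinearMap.range (B : E →ₗ[ℝ] Y)) ≤ k) :
    ∃ v : Fin k → E, (∀ i, ‖v i‖ ≤ 1) ∧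
      ∀ y, ‖S y‖ ≤ ‖S - B‖ * ‖y‖ + ‖S‖ * ∑ i, |⟪v i, y⟫| := by
  set K := LinearMap.ker (B : E →ₗ[ℝ] Y)
  have hrank : finrank ℝ Kᗮ ≤ k := by
    have h₁ : finrank ℝ K + finrank ℝ Kᗮ = finrank ℝ E := K.finrank_add_finrank_orthogonal
    have h₂ : finrank ℝ (LinearMap.range (B : E →ₗ[ℝ] Y)) + finrank ℝ K = finrank ℝ E :=
      LinearMap.finrank_range_add_finrank_ker _
    omega
  obtain ⟨v, hv, hP⟩ := Kᗮ.exists_norm_starProjection_le_sum_inner hrank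
  refine ⟨v, hv, fun y => ?_⟩
  have hsplit : S y = (S - B) (K.starProjection y) + S (Kᗮ.starProjection y) := by
    have hB : B (K.starProjection y) = 0 := K.starProjection_apply_mem y
    rw [sub_apply, hB, sub_zero, ← map_add, K.starProjection_add_starProjection_orthogonal]
  rw [hsplit]
  calc _ ≤ ‖S - B‖ * ‖K.starProjection y‖ + ‖S‖ * ‖Kᗮ.starProjection y‖ :=
        (norm_add_le _ _).trans (add_le_add ((S - B).le_opNorm _) (S.le_opNorm _))
    _ ≤ ‖S - B‖ * ‖y‖ + ‖S‖ * ∑ i, |⟪v i, y⟫| := by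
        gcongr
        exacts [K.norm_starProjection_apply_le y, hP y]

theorem exists_norm_apply_le_add_sum_inner_of_approxNumber_lt (T : E →L[ℝ] Y)
    (M : Submodule ℝ E) [FiniteDimensional ℝ M] {k : ℕ} {δ : ℝ}
    (h : approxNumber (k + 1) (T ∘L M.subtypeL) < δ) :
    ∃ v : Fin k → E, (∀ i, ‖v i‖ ≤ 1) ∧ ∀ y ∈ M, ‖T y‖ ≤ δ * ‖y‖ + ‖T‖ * ∑ i, |⟪v i, y⟫| := by
  obtain ⟨B, _, hBk, hB⟩ := exists_norm_sub_lt_of_approxNumber_lt k.succ_pos h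
  obtain ⟨v, hv, hbound⟩ :=
    exists_norm_apply_le_add_sum_inner (T ∘L M.subtypeL) B (Nat.lt_succ_iff.mp hBk)
  refine ⟨fun i => v i, hv, fun y hy => ?_⟩
  calc ‖T y‖ = ‖(T ∘L M.subtypeL) ⟨y, hy⟩‖ := rfl
    _ ≤ ‖T ∘L M.subtypeL - B‖ * ‖y‖ + ‖T ∘L M.subtypeL‖ * ∑ i, |⟪(v i : E), y⟫| :=
      hbound ⟨y, hy⟩
    _ ≤ δ * ‖y‖ + ‖T‖ * ∑ i, |⟪(v i : E), y⟫| := by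
      gcongr
      exact (T.opNorm_comp_le _).trans (mul_le_of_le_one_right (norm_nonneg T) M.norm_subtypeL_le)

theorem approxNumber_le_of_norm_apply_le_of_mem_orthogonal (T : E →L[ℝ] Y)
    {F : Submodule ℝ E} [FiniteDimensional ℝ F] {n : ℕ} (hF : finrank ℝ F < n) {δ : ℝ}
    (hδ : 0 ≤ δ) (hT : ∀ y ∈ Fᗮ, ‖T y‖ ≤ δ * ‖y‖) : approxNumber n T ≤ δ := by
  set B := T ∘L F.starProjection
  have hrange : LinearMap.range (B : E →ₗ[ℝ] Y) ≤ F.map (T : E →ₗ[ℝ] Y) := by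
    rintro _ ⟨x, rfl⟩
    exact ⟨_, F.starProjection_apply_mem x, rfl⟩
  have : FiniteDimensional ℝ (LinearMap.range (B : E →ₗ[ℝ] Y)) :=
    Submodule.finiteDimensional_of_le hrange
  have hrank : finrank ℝ (LinearMap.range (B : E →ₗ[ℝ] Y)) < n :=
    ((Submodule.finrank_mono hrange).trans (Submodule.finrank_map_le _ _)).trans_lt hF
  refine (approxNumber_le_norm_sub T B hrank).trans ((T - B).opNorm_le_bound hδ fun x => ?_)
  have hx : (T - B) x = T (Fᗮ.starProjection x) := by
    simp [B, F.starProjection_orthogonal', map_sub]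
  rw [hx]
  exact (hT _ (Fᗮ.starProjection_apply_mem x)).trans
    (mul_le_mul_of_nonneg_left (Fᗮ.norm_starProjection_apply_le x) hδ)

variable [CompleteSpace E]

theorem exists_tendsto_inner_of_norm_le {α : Type*} (𝒰 : Ultrafilter α) {u : α → E} {C : ℝ}
    (hu : ∀ a, ‖u a‖ ≤ C) : ∃ v : E, ∀ y, Tendsto (fun a => ⟪u a, y⟫) 𝒰 (𝓝 ⟪v, y⟫) := by
  let g : α → WeakDual ℝ E := fun a => StrongDual.toWeakDual (InnerProductSpace.toDual ℝ E (u a))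
  have hg : ∀ a, g a ∈ WeakDual.toStrongDual ⁻¹' Metric.closedBall 0 C := fun a => by
    simpa [g] using hu a
  obtain ⟨φ, -, hφ⟩ := (WeakDual.isCompact_closedBall 0 C).ultrafilter_le_nhds' (𝒰.map g)
    (Ultrafilter.mem_map.mpr (Filter.univ_mem' hg))
  refine ⟨(InnerProductSpace.toDual ℝ E).symm (WeakDual.toStrongDual φ), fun y => ?_⟩
  rw [InnerProductSpace.toDual_symm_apply]
  exact ((WeakDual.eval_continuous y).tendsto φ).comp hφ

theorem approxNumber_le_of_forall_finiteDimensional (T : E →L[ℝ] Y) (n : ℕ) {δ : ℝ}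
    (h : ∀ M : Submodule ℝ E, FiniteDimensional ℝ M → approxNumber n (T ∘L M.subtypeL) ≤ δ) :
    approxNumber n T ≤ δ := by
  have hδ : 0 ≤ δ := (approxNumber_nonneg n _).trans (h ⊥ inferInstance)
  obtain _ | k := n
  · exact (approxNumber_zero T).trans_le hδ
  refine le_of_forall_gt_imp_ge_of_dense fun δ' hδ' => ?_
  have hfamily : ∀ S : Finset E, ∃ v : Fin k → E, (∀ i, ‖v i‖ ≤ 1) ∧
      ∀ y ∈ Submodule.span ℝ (S : Set E), ‖T y‖ ≤ δ' * ‖y‖ + ‖T‖ * ∑ i, |⟪v i, y⟫| := fun S =>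
    exists_norm_apply_le_add_sum_inner_of_approxNumber_lt T _ ((h _ inferInstance).trans_lt hδ')
  choose v hv hbound using hfamily
  let 𝒰 := Ultrafilter.of (atTop : Filter (Finset E))
  choose w hw using fun i => exists_tendsto_inner_of_norm_le 𝒰 (fun S => hv S i)
  have : FiniteDimensional ℝ (Submodule.span ℝ (Set.range w)) :=
    FiniteDimensional.span_of_finite ℝ (Set.finite_range w)
  have hrank : finrank ℝ (Submodule.span ℝ (Set.range w)) < k + 1 :=
    ((finrank_range_le_card (R := ℝ) w).trans_eq (Fintype.card_fin k)).trans_lt k.lt_succ_self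
  refine approxNumber_le_of_norm_apply_le_of_mem_orthogonal T hrank (hδ.trans hδ'.le)
    fun y hy => ?_
  have hwy : ∀ i, ⟪w i, y⟫ = 0 := fun i =>
    (Submodule.mem_orthogonal _ _).mp hy _ (Submodule.subset_span ⟨i, rfl⟩)
  have hlim : Tendsto (fun S => δ' * ‖y‖ + ‖T‖ * ∑ i, |⟪v S i, y⟫|) 𝒰 (𝓝 (δ' * ‖y‖)) := by
    simpa [hwy] using tendsto_const_nhds.add
      (tendsto_const_nhds.mul (tendsto_finsetSum _ fun i _ => (hw i y).abs))
  have hev : ∀ᶠ S in (atTop : Filter (Finset E)), ‖T y‖ ≤ δ' * ‖y‖ + ‖T‖ * ∑ i, |⟪v S i, y⟫| :=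
    (eventually_ge_atTop {y}).mono fun S hS =>
      hbound S y (Submodule.subset_span (hS (Finset.mem_singleton_self y)))
  exact ge_of_tendsto hlim (Ultrafilter.of_le _ hev)

end Hilbert

theorem weyl_eq_approx_of_hilbert_general
    {H Y : Type*} [NormedAddCommGroup H] [InnerProductSpace ℝ H] [CompleteSpace H]
    [NormedAddCommGroup Y] [NormedSpace ℝ Y]
    (T : H →L[ℝ] Y) (n : ℕ) :
    weylNumber n T = approxNumber n T :=
  le_antisymm (weylNumber_le_approxNumber n T)
    (approxNumber_le_of_forall_finiteDimensional T n fun M _ =>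
      approxNumber_comp_le_weylNumber_of_finiteDimensional n T M.norm_subtypeL_le)

/-- If `H` is a Hilbert space and `Y` a Banach space, then for `T : H → Y`
the Weyl and approximation numbers coincide: `x_n(T) = a_n(T)` for all `n`. -/
theorem weyl_eq_approx_of_hilbert
    {H Y : Type*} [NormedAddCommGroup H] [InnerProductSpace ℝ H] [CompleteSpace H]
    [NormedAddCommGroup Y] [NormedSpace ℝ Y] [CompleteSpace Y]
    (T : H →L[ℝ] Y) (n : ℕ) :
    weylNumber n T = approxNumber n T :=
  weyl_eq_approx_of_hilbert_general T n
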